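/- Let S : ℝ² → ℝ² be continuously differentiable with compact support, and assume the Fourier transform F[div^⊥ S] is integrable on ℝ², where div^⊥ S := −∂₂S₁ + ∂₁S₂. Define the indicator I_s(z) := (i/(2π)²) ∫_{S¹} ∫_0^∞ (u_s^∞(x̂,ω)·x̂^⊥) e^{i k_s x̂·z} (k_s²/√μ) dω dσ(x̂) for z ∈ ℝ². Then I_s(z) = div^⊥ S(z) for every z ∈ ℝ². -/

import Mathlib

/-!
STATEMENT 5 (second claim of Theorem 2.2, n = 2): the indicator `I_s` built from the
shear far field patterns equals `div^⊥ S = -∂₂S₁ + ∂₁S₂`.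
-/

open MeasureTheory Real

noncomputable section

namespace ElasticS2D

abbrev E2 := EuclideanSpace ℝ (Fin 2)

/-- Fourier transform of a scalar function on ℝ². -/
def FT (U : E2 → ℂ) (ξ : E2) : ℂ :=
  ∫ x : E2, U x * Complex.exp (-Complex.I * ((∑ i, x i * ξ i : ℝ) : ℂ))

/-- Shear wavenumber `k_s = ω / √μ`. -/
def ks (mu ω : ℝ) : ℝ := ω / Real.sqrt mu

/-- `x̂^⊥ := (-x̂₂, x̂₁)`. -/
def perp (xhat : E2) : Fin 2 → ℝ := ![-(xhat 1), xhat 0]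

/-- Shear far field pattern
`u_s^∞(x̂,ω) := x̂^⊥ ∫ e^{-i k_s x̂·y} (S(y)·x̂^⊥) dy`. -/
def us (mu : ℝ) (S : E2 → Fin 2 → ℝ) (xhat : E2) (ω : ℝ) : Fin 2 → ℂ :=
  fun j => ((perp xhat j : ℝ) : ℂ) *
    ∫ y : E2, Complex.exp (-Complex.I * ((ks mu ω : ℝ) : ℂ) *
        ((∑ i, xhat i * y i : ℝ) : ℂ)) * ((∑ i, S y i * perp xhat i : ℝ) : ℂ)

/-- `div^⊥ S = -∂₂S₁ + ∂₁S₂`. -/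
def divPerpS (S : E2 → Fin 2 → ℝ) (z : E2) : ℝ :=
  -(fderiv ℝ (fun x => S x 0) z (EuclideanSpace.single 1 (1 : ℝ))) +
    fderiv ℝ (fun x => S x 1) z (EuclideanSpace.single 0 (1 : ℝ))

/-- The indicator
`I_s(z) := (i/(2π)²) ∫_{S¹} ∫_0^∞ (u_s^∞(x̂,ω)·x̂^⊥) e^{i k_s x̂·z} (k_s²/√μ) dω dσ(x̂)`. -/
def Is (mu : ℝ) (S : E2 → Fin 2 → ℝ) (z : E2) : ℂ :=
  (Complex.I * (((2 * π) ^ 2 : ℝ) : ℂ)⁻¹) *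
    ∫ xhat : Metric.sphere (0 : E2) 1,
      (∫ ω in Set.Ioi (0 : ℝ),
        (∑ j, us mu S (xhat : E2) ω j * ((perp (xhat : E2) j : ℝ) : ℂ)) *
          Complex.exp (Complex.I * ((ks mu ω : ℝ) : ℂ) *
            ((∑ i, (xhat : E2) i * z i : ℝ) : ℂ)) *
          ((ks mu ω ^ 2 / Real.sqrt mu : ℝ) : ℂ))
      ∂((volume : Measure E2).toSphere)

/-! ### Auxiliary lemmas -/

open Set Metric
open scoped FourierTransform RealInnerProductSpace

lemma finrank_E2 : Module.finrank ℝ E2 = 2 := by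
  simp [finrank_euclideanSpace_fin]

/-- Polar coordinates for integrals on `ℝ²`. -/
lemma integral_polar (F : E2 → ℂ) (hF : Integrable F) :
    ∫ x, F x = ∫ xhat : Metric.sphere (0:E2) 1,
      (∫ r in Set.Ioi (0:ℝ), r • F (r • (xhat : E2))) ∂((volume : Measure E2).toSphere) := by
  have h1 : ∫ x, F x = ∫ x : ({(0:E2)}ᶜ : Set E2), F x.1 ∂((volume : Measure E2).comap Subtype.val) := by
    rw [integral_subtype_comap (measurableSet_singleton _).compl fun x ↦ F x,
      restrict_compl_singleton]
  set G : Metric.sphere (0:E2) 1 × Ioi (0:ℝ) → ℂ := fun p => F (p.2.1 • p.1.1) with hG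
  have hGcomp : ∀ x : ({(0:E2)}ᶜ : Set E2), G (homeomorphUnitSphereProd E2 x) = F x.1 := by
    intro x
    have hx : ‖x.1‖ ≠ 0 := norm_ne_zero_iff.2 x.2
    simp [hG, smul_inv_smul₀ hx]
  have h2 : ∫ x : ({(0:E2)}ᶜ : Set E2), F x.1 ∂((volume : Measure E2).comap Subtype.val)
      = ∫ p, G p ∂(((volume : Measure E2).toSphere).prod
          (Measure.volumeIoiPow (Module.finrank ℝ E2 - 1))) := by
    rw [← (volume : Measure E2).measurePreserving_homeomorphUnitSphereProd.integral_comp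
      (Homeomorph.measurableEmbedding _) G]
    exact integral_congr_ae (Filter.Eventually.of_forall fun x => (hGcomp x).symm)
  have hFsub : Integrable (fun x : ({(0:E2)}ᶜ : Set E2) => F x.1)
      ((volume : Measure E2).comap Subtype.val) := by
    have := (MeasurableEmbedding.subtype_coe (s := ({(0:E2)}ᶜ : Set E2))
      (measurableSet_singleton _).compl).integrableOn_iff_comap
      (f := F) (μ := (volume : Measure E2)) (s := ({(0:E2)}ᶜ : Set E2))
      (by rw [Subtype.range_coe])
    have h3 : IntegrableOn F ({(0:E2)}ᶜ) volume := hF.integrableOn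
    rw [this] at h3
    simp [Subtype.coe_preimage_self, IntegrableOn] at h3
    exact h3
  have hGint : Integrable G (((volume : Measure E2).toSphere).prod
      (Measure.volumeIoiPow (Module.finrank ℝ E2 - 1))) := by
    rw [← (volume : Measure E2).measurePreserving_homeomorphUnitSphereProd.integrable_comp_emb
      (Homeomorph.measurableEmbedding _)]
    exact hFsub.congr (Filter.Eventually.of_forall fun x => (hGcomp x).symm)
  rw [h1, h2, integral_prod _ hGint]
  refine integral_congr_ae (Filter.Eventually.of_forall fun xhat => ?_)
  have hdim : Module.finrank ℝ E2 - 1 = 1 := by rw [finrank_E2]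
  rw [hdim]
  simp only [hG, Measure.volumeIoiPow, ENNReal.ofReal]
  rw [integral_withDensity_eq_integral_smul
    ((measurable_subtype_coe.pow_const _).real_toNNReal) (fun r : Ioi (0:ℝ) => F (r.1 • xhat.1)),
    integral_subtype_comap measurableSet_Ioi (fun r : ℝ => (r ^ 1).toNNReal • F (r • xhat.1))]
  refine setIntegral_congr_fun measurableSet_Ioi fun r hr => ?_
  rw [NNReal.smul_def, Real.coe_toNNReal _ (pow_nonneg (le_of_lt hr) _), pow_one]

lemma inner_eq_sum (x y : E2) : ⟪x, y⟫ = ∑ i, x i * y i := by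
  simp [PiLp.inner_apply, RCLike.inner_apply, mul_comm]

lemma FT_eq_fourier (f : E2 → ℂ) (ξ : E2) : FT f ξ = 𝓕 f ((2 * π)⁻¹ • ξ) := by
  rw [Real.fourier_eq']
  unfold FT
  refine integral_congr_ae (Filter.Eventually.of_forall fun x => ?_)
  have h1 : ⟪x, (2 * π)⁻¹ • ξ⟫ = (2 * π)⁻¹ * ∑ i, x i * ξ i := by
    rw [real_inner_smul_right, inner_eq_sum]
  have h2 : -2 * π * ⟪x, (2 * π)⁻¹ • ξ⟫ = -(∑ i, x i * ξ i) := by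
    rw [h1, ← mul_assoc]
    rw [show -2 * π * (2 * π)⁻¹ = -1 by field_simp]
    ring
  simp only [h2, smul_eq_mul]
  push_cast
  ring

section
variable (S : E2 → Fin 2 → ℝ) (hS : ContDiff ℝ 1 S) (hS_supp : HasCompactSupport S)
include hS hS_supp
set_option linter.unusedSectionVars false

/-- complexified components -/
def fC (S : E2 → Fin 2 → ℝ) (i : Fin 2) : E2 → ℂ := fun x => ((S x i : ℝ) : ℂ)

lemma contDiff_comp (i : Fin 2) : ContDiff ℝ 1 (fun x => S x i) :=
  (ContinuousLinearMap.proj (R := ℝ) (φ := fun _ : Fin 2 => ℝ) i).contDiff.comp hS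

lemma supp_comp (i : Fin 2) : HasCompactSupport (fun x => S x i) :=
  hS_supp.comp_left (g := fun v : Fin 2 → ℝ => v i) rfl

lemma contDiff_fC (i : Fin 2) : ContDiff ℝ 1 (fC S i) :=
  Complex.ofRealCLM.contDiff.comp (contDiff_comp S hS hS_supp i)

lemma supp_fC (i : Fin 2) : HasCompactSupport (fC S i) :=
  (supp_comp S hS hS_supp i).comp_left (g := Complex.ofReal) rfl

lemma integrable_fC (i : Fin 2) : Integrable (fC S i) :=
  ((contDiff_fC S hS hS_supp i).continuous).integrable_of_hasCompactSupport
    (supp_fC S hS hS_supp i)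

lemma integrable_fderiv_fC (i : Fin 2) : Integrable (fderiv ℝ (fC S i)) :=
  ((contDiff_fC S hS hS_supp i).continuous_fderiv one_ne_zero).integrable_of_hasCompactSupport
    ((supp_fC S hS hS_supp i).fderiv ℝ)

lemma fderiv_fC_eq (i : Fin 2) (x : E2) (w : E2) :
    fderiv ℝ (fC S i) x w = ((fderiv ℝ (fun y => S y i) x w : ℝ) : ℂ) := by
  have h : fderiv ℝ (fC S i) x
      = Complex.ofRealCLM.comp (fderiv ℝ (fun y => S y i) x) :=
    (Complex.ofRealCLM.hasFDerivAt.comp x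
      (((contDiff_comp S hS hS_supp i).differentiable one_ne_zero) x).hasFDerivAt).fderiv
  rw [h]; rfl

lemma fourier_fderiv_apply (i : Fin 2) (w : E2) (ξ : E2) :
    𝓕 (fun x => fderiv ℝ (fC S i) x w) ξ
      = (2 * π * Complex.I) * ⟪ξ, w⟫ * 𝓕 (fC S i) ξ := by
  rw [← Real.fourier_continuousLinearMap_apply (integrable_fderiv_fC S hS hS_supp i),
    Real.fourier_fderiv (integrable_fC S hS hS_supp i)
      ((contDiff_fC S hS hS_supp i).differentiable one_ne_zero) (integrable_fderiv_fC S hS hS_supp i)]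
  simp [VectorFourier.fourierSMulRight_apply]
  have hin : (((innerSL ℝ ξ) w : ℝ) : ℂ) = ((⟪ξ, w⟫ : ℝ) : ℂ) := rfl
  rw [hin]
  ring

lemma integrable_fderiv_apply (i : Fin 2) (w : E2) :
    Integrable (fun x => fderiv ℝ (fC S i) x w) := by
  have hc : Continuous (fun x => fderiv ℝ (fC S i) x w) :=
    (ContinuousLinearMap.apply ℝ ℂ w).continuous.comp
      ((contDiff_fC S hS hS_supp i).continuous_fderiv one_ne_zero)
  exact hc.integrable_of_hasCompactSupport ((supp_fC S hS hS_supp i).fderiv_apply ℝ w)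

lemma fourier_g_eq (ξ : E2) :
    𝓕 (fun x => ((divPerpS S x : ℝ) : ℂ)) ξ
      = (2 * π * Complex.I) * (ξ 0 * 𝓕 (fC S 1) ξ - ξ 1 * 𝓕 (fC S 0) ξ) := by
  set e0 : E2 := EuclideanSpace.single 0 (1:ℝ)
  set e1 : E2 := EuclideanSpace.single 1 (1:ℝ)
  have hsplit : 𝓕 (fun x => ((divPerpS S x : ℝ) : ℂ)) ξ
      = -(𝓕 (fun x => fderiv ℝ (fC S 0) x e1) ξ) + 𝓕 (fun x => fderiv ℝ (fC S 1) x e0) ξ := by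
    simp only [Real.fourier_eq]
    rw [← integral_neg, ← integral_add]
    · refine integral_congr_ae (Filter.Eventually.of_forall fun x => ?_)
      simp only [← smul_neg, ← smul_add]
      congr 1
      rw [fderiv_fC_eq S hS hS_supp, fderiv_fC_eq S hS hS_supp]
      unfold divPerpS
      push_cast
      ring
    · exact ((Real.fourierIntegral_convergent_iff ξ).2
        (integrable_fderiv_apply S hS hS_supp 0 e1)).neg
    · exact (Real.fourierIntegral_convergent_iff ξ).2
        (integrable_fderiv_apply S hS hS_supp 1 e0)
  rw [hsplit, fourier_fderiv_apply S hS hS_supp 0 e1 ξ, fourier_fderiv_apply S hS hS_supp 1 e0 ξ]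
  have h0 : ⟪ξ, e0⟫ = ξ 0 := by
    simp [e0, EuclideanSpace.inner_single_right]
  have h1 : ⟪ξ, e1⟫ = ξ 1 := by
    simp [e1, EuclideanSpace.inner_single_right]
  rw [h0, h1]
  push_cast
  ring

lemma FT_g_eq (ξ : E2) :
    FT (fun x => ((divPerpS S x : ℝ) : ℂ)) ξ
      = Complex.I * (ξ 0 * FT (fC S 1) ξ - ξ 1 * FT (fC S 0) ξ) := by
  rw [FT_eq_fourier, FT_eq_fourier, FT_eq_fourier, fourier_g_eq S hS hS_supp]
  have hc : ((2 * π)⁻¹ • ξ) 0 = (2 * π)⁻¹ * ξ 0 := rfl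
  have hc1 : ((2 * π)⁻¹ • ξ) 1 = (2 * π)⁻¹ * ξ 1 := rfl
  rw [hc, hc1]
  have hπC : (π : ℂ) ≠ 0 := Complex.ofReal_ne_zero.2 Real.pi_ne_zero
  push_cast
  field_simp

lemma integrable_FT_integrand (i : Fin 2) (ξ : E2) :
    Integrable (fun x => fC S i x * Complex.exp (-Complex.I * ((∑ j, x j * ξ j : ℝ) : ℂ))) := by
  have hc : Continuous (fun x : E2 => (∑ j, x j * ξ j : ℝ)) := by
    refine continuous_finset_sum _ fun j _ => ?_
    exact ((EuclideanSpace.proj j : E2 →L[ℝ] ℝ).continuous).mul continuous_const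
  have hcont : Continuous (fun x => fC S i x
      * Complex.exp (-Complex.I * ((∑ j, x j * ξ j : ℝ) : ℂ))) :=
    ((contDiff_fC S hS hS_supp i).continuous).mul
      (Complex.continuous_exp.comp (continuous_const.mul (Complex.continuous_ofReal.comp hc)))
  refine hcont.integrable_of_hasCompactSupport ?_
  exact (supp_fC S hS hS_supp i).mul_right

lemma FT_combo (c : Fin 2 → ℝ) (ξ : E2) :
    FT (fun y => ((∑ i, S y i * c i : ℝ) : ℂ)) ξ
      = (c 0 : ℂ) * FT (fC S 0) ξ + (c 1 : ℂ) * FT (fC S 1) ξ := by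
  unfold FT
  rw [← integral_const_mul, ← integral_const_mul, ← integral_add
    ((integrable_FT_integrand S hS hS_supp 0 ξ).const_mul _)
    ((integrable_FT_integrand S hS hS_supp 1 ξ).const_mul _)]
  refine integral_congr_ae (Filter.Eventually.of_forall fun y => ?_)
  simp only [Fin.sum_univ_two, fC]
  push_cast
  ring

end

theorem indicator_s_eq_divPerp (lam mu : ℝ) (hmu : 0 < mu) (hlm : 0 < 2 * mu + lam)
    (S : E2 → Fin 2 → ℝ) (hS : ContDiff ℝ 1 S) (hS_supp : HasCompactSupport S)
    (hFT : Integrable (FT (fun y => ((divPerpS S y : ℝ) : ℂ))))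
    (z : E2) :
    Is mu S z = ((divPerpS S z : ℝ) : ℂ) := by
  have hπ : (0:ℝ) < 2 * π := by positivity
  have hsq : (0:ℝ) < Real.sqrt mu := Real.sqrt_pos.2 hmu
  set g : E2 → ℂ := fun y => ((divPerpS S y : ℝ) : ℂ) with hgdef
  set e0 : E2 := EuclideanSpace.single 0 (1:ℝ)
  set e1 : E2 := EuclideanSpace.single 1 (1:ℝ)
  -- continuity, support, integrability of g
  have hA : Continuous (fun x => fderiv ℝ (fC S 0) x e1) :=
    (ContinuousLinearMap.apply ℝ ℂ e1).continuous.comp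
      ((contDiff_fC S hS hS_supp 0).continuous_fderiv one_ne_zero)
  have hB : Continuous (fun x => fderiv ℝ (fC S 1) x e0) :=
    (ContinuousLinearMap.apply ℝ ℂ e0).continuous.comp
      ((contDiff_fC S hS hS_supp 1).continuous_fderiv one_ne_zero)
  have hg_eq : g = fun x => -(fderiv ℝ (fC S 0) x e1) + fderiv ℝ (fC S 1) x e0 := by
    funext x
    rw [hgdef]
    simp only [fderiv_fC_eq S hS hS_supp]
    unfold divPerpS
    push_cast
    ring
  have hg_cont : Continuous g := by
    rw [hg_eq]; exact hA.neg.add hB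
  have hg_supp : HasCompactSupport g := by
    rw [hg_eq]
    exact HasCompactSupport.add
      (HasCompactSupport.neg ((supp_fC S hS hS_supp 0).fderiv_apply ℝ e1))
      ((supp_fC S hS hS_supp 1).fderiv_apply ℝ e0)
  have hg_int : Integrable g := hg_cont.integrable_of_hasCompactSupport hg_supp
  -- integrability of 𝓕 g
  have hFTg : Integrable (FT g) := hFT
  have h2π : (2 * π : ℝ) ≠ 0 := ne_of_gt hπ
  have hfourier_eq : (fun x : E2 => FT g ((2 * π) • x)) = 𝓕 g := by
    funext x
    rw [FT_eq_fourier, smul_smul, inv_mul_cancel₀ h2π, one_smul]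
  have h𝓕g_int : Integrable (𝓕 g) := by
    rw [← hfourier_eq]
    exact (integrable_comp_smul_iff volume (FT g) h2π).2 hFTg
  -- Fz and its integrability
  set Fz : E2 → ℂ := fun η => FT g η * Complex.exp (Complex.I * ((∑ i, η i * z i : ℝ) : ℂ))
    with hFzdef
  have hc_sum : Continuous (fun η : E2 => (∑ i, η i * z i : ℝ)) := by
    refine continuous_finset_sum _ fun j _ => ?_
    exact ((EuclideanSpace.proj j : E2 →L[ℝ] ℝ).continuous).mul continuous_const
  have hFz_int : Integrable Fz := by
    refine Integrable.mono' hFTg.norm ?_ (Filter.Eventually.of_forall fun η => ?_)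
    · exact hFTg.aestronglyMeasurable.mul
        ((Complex.continuous_exp.comp (continuous_const.mul
          (Complex.continuous_ofReal.comp hc_sum))).aestronglyMeasurable)
    · rw [hFzdef]
      simp only [norm_mul]
      have : ‖Complex.exp (Complex.I * ((∑ i, η i * z i : ℝ) : ℂ))‖ = 1 := by
        rw [Complex.norm_exp]
        simp [Complex.mul_re]
      rw [this, mul_one]
  -- the key pointwise inner-integral computation
  have key : ∀ xhat : Metric.sphere (0:E2) 1,
      (∫ ω in Set.Ioi (0 : ℝ),
        (∑ j, us mu S (xhat : E2) ω j * ((perp (xhat : E2) j : ℝ) : ℂ)) *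
          Complex.exp (Complex.I * ((ks mu ω : ℝ) : ℂ) *
            ((∑ i, (xhat : E2) i * z i : ℝ) : ℂ)) *
          ((ks mu ω ^ 2 / Real.sqrt mu : ℝ) : ℂ))
      = (-Complex.I) * ∫ t in Set.Ioi (0:ℝ), t • Fz (t • (xhat : E2)) := by
    intro xhat
    have hxhat : ‖(xhat : E2)‖ = 1 := by
      have := xhat.2
      rwa [mem_sphere_zero_iff_norm] at this
    have hsum_sq : (xhat : E2) 0 * (xhat : E2) 0 + (xhat : E2) 1 * (xhat : E2) 1 = 1 := by
      have h := real_inner_self_eq_norm_sq ((xhat : E2))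
      rw [hxhat, inner_eq_sum, Fin.sum_univ_two] at h
      simpa using h
    -- the function G for the substitution
    set G : ℝ → ℂ := fun t => ((-Complex.I) * (t • Fz (t • (xhat : E2)))) / (Real.sqrt mu : ℂ)
      with hGdef
    have hpt : ∀ ω : ℝ,
        (∑ j, us mu S (xhat : E2) ω j * ((perp (xhat : E2) j : ℝ) : ℂ)) *
          Complex.exp (Complex.I * ((ks mu ω : ℝ) : ℂ) *
            ((∑ i, (xhat : E2) i * z i : ℝ) : ℂ)) *
          ((ks mu ω ^ 2 / Real.sqrt mu : ℝ) : ℂ)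
        = G ((Real.sqrt mu)⁻¹ * ω) := by
      intro ω
      set k : ℝ := ks mu ω with hk
      have hkk : (Real.sqrt mu)⁻¹ * ω = k := by
        rw [hk]; unfold ks; rw [div_eq_mul_inv]; ring
      -- step 1: the us-sum equals FT h (k • xhat)
      have hsum : (∑ j, us mu S (xhat : E2) ω j * ((perp (xhat : E2) j : ℝ) : ℂ))
          = FT (fun y => ((∑ i, S y i * perp (xhat : E2) i : ℝ) : ℂ)) (k • (xhat : E2)) := by
        unfold us
        rw [Fin.sum_univ_two]
        have hB' : (∫ y : E2, Complex.exp (-Complex.I * ((ks mu ω : ℝ) : ℂ) *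
              ((∑ i, (xhat : E2) i * y i : ℝ) : ℂ)) *
              ((∑ i, S y i * perp (xhat : E2) i : ℝ) : ℂ))
            = FT (fun y => ((∑ i, S y i * perp (xhat : E2) i : ℝ) : ℂ)) (k • (xhat : E2)) := by
          unfold FT
          refine integral_congr_ae (Filter.Eventually.of_forall fun y => ?_)
          beta_reduce
          have harg : (∑ i, y i * (k • (xhat : E2)) i : ℝ) = k * (∑ i, (xhat : E2) i * y i) := by
            rw [Finset.mul_sum]
            refine Finset.sum_congr rfl fun i _ => ?_
            have : (k • (xhat : E2)) i = k * (xhat : E2) i := rfl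
            rw [this]; ring
          rw [harg]
          push_cast
          rw [hk]; ring_nf
        rw [hB']
        have hp0 : perp (xhat : E2) 0 = -((xhat : E2) 1) := rfl
        have hp1 : perp (xhat : E2) 1 = (xhat : E2) 0 := rfl
        rw [hp0, hp1]
        set T := FT (fun y => ((∑ i, S y i * perp (xhat : E2) i : ℝ) : ℂ)) (k • (xhat : E2))
          with hT
        rw [show ((-((xhat : E2) 1) : ℝ) : ℂ) * T * ((-((xhat : E2) 1) : ℝ) : ℂ)
            + (((xhat : E2) 0 : ℝ) : ℂ) * T * (((xhat : E2) 0 : ℝ) : ℂ)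
          = (((xhat : E2) 0 * (xhat : E2) 0 + (xhat : E2) 1 * (xhat : E2) 1 : ℝ) : ℂ) * T by
            push_cast; ring, hsum_sq]
        norm_num
      -- step 2: FT g (k • xhat) = I * k * FT h (k • xhat)
      have hFTh : FT g (k • (xhat : E2))
          = Complex.I * (k : ℂ)
            * FT (fun y => ((∑ i, S y i * perp (xhat : E2) i : ℝ) : ℂ)) (k • (xhat : E2)) := by
        rw [hgdef, FT_g_eq S hS hS_supp, FT_combo S hS hS_supp (perp (xhat : E2))]
        have hc0 : (k • (xhat : E2)) 0 = k * (xhat : E2) 0 := rfl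
        have hc1 : (k • (xhat : E2)) 1 = k * (xhat : E2) 1 := rfl
        rw [hc0, hc1]
        have hp0 : perp (xhat : E2) 0 = -((xhat : E2) 1) := rfl
        have hp1 : perp (xhat : E2) 1 = (xhat : E2) 0 := rfl
        rw [hp0, hp1]
        push_cast
        ring
      -- conclude, with all casts
      rw [hsum, hGdef]
      simp only [hkk]
      have hFzk : Fz (k • (xhat : E2)) = FT g (k • (xhat : E2))
          * Complex.exp (Complex.I * ((k : ℂ)) * ((∑ i, (xhat : E2) i * z i : ℝ) : ℂ)) := by
        rw [hFzdef]
        beta_reduce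
        have harg : (∑ i, (k • (xhat : E2)) i * z i : ℝ) = k * (∑ i, (xhat : E2) i * z i) := by
          rw [Finset.mul_sum]
          refine Finset.sum_congr rfl fun i _ => ?_
          have : (k • (xhat : E2)) i = k * (xhat : E2) i := rfl
          rw [this]; ring
        rw [harg]
        push_cast
        ring_nf
      rw [hFzk, hFTh]
      have hsqC : ((Real.sqrt mu : ℝ) : ℂ) ≠ 0 := Complex.ofReal_ne_zero.2 (ne_of_gt hsq)
      rw [Complex.real_smul]
      push_cast
      ring_nf
      rw [Complex.I_sq]
      ring
    calc (∫ ω in Set.Ioi (0 : ℝ),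
        (∑ j, us mu S (xhat : E2) ω j * ((perp (xhat : E2) j : ℝ) : ℂ)) *
          Complex.exp (Complex.I * ((ks mu ω : ℝ) : ℂ) *
            ((∑ i, (xhat : E2) i * z i : ℝ) : ℂ)) *
          ((ks mu ω ^ 2 / Real.sqrt mu : ℝ) : ℂ))
        = ∫ ω in Set.Ioi (0 : ℝ), G ((Real.sqrt mu)⁻¹ * ω) := by
          exact setIntegral_congr_fun measurableSet_Ioi fun ω _ => hpt ω
      _ = ((Real.sqrt mu)⁻¹)⁻¹ • ∫ t in Set.Ioi ((Real.sqrt mu)⁻¹ * 0), G t :=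
          integral_comp_mul_left_Ioi G 0 (inv_pos.2 hsq)
      _ = (-Complex.I) * ∫ t in Set.Ioi (0:ℝ), t • Fz (t • (xhat : E2)) := by
          rw [mul_zero, inv_inv]
          rw [show (∫ t in Set.Ioi (0:ℝ), G t)
            = (Real.sqrt mu : ℂ)⁻¹ * ((-Complex.I) * ∫ t in Set.Ioi (0:ℝ),
                t • Fz (t • (xhat : E2))) by
            rw [← integral_const_mul, ← integral_const_mul]
            refine setIntegral_congr_fun measurableSet_Ioi fun t _ => ?_
            rw [hGdef]
            field_simp]
          rw [← mul_assoc]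
          rw [Complex.real_smul]
          have hsqC : ((Real.sqrt mu : ℝ) : ℂ) ≠ 0 := Complex.ofReal_ne_zero.2 (ne_of_gt hsq)
          field_simp
  -- assemble
  unfold Is
  rw [integral_congr_ae (Filter.Eventually.of_forall key), integral_const_mul,
    ← integral_polar Fz hFz_int]
  -- compute ∫ Fz via Fourier inversion
  have hinv : ∫ x, Fz ((2 * π) • x) = g z := by
    have : ∀ x : E2, Fz ((2 * π) • x)
        = (Real.fourierChar (⟪x, z⟫)) • 𝓕 g x := by
      intro x
      rw [hFzdef, ← hfourier_eq]
      beta_reduce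
      have harg : (∑ i, ((2 * π) • x) i * z i : ℝ) = 2 * π * ⟪x, z⟫ := by
        rw [inner_eq_sum, Finset.mul_sum]
        refine Finset.sum_congr rfl fun i _ => ?_
        have : ((2 * π) • x) i = (2 * π) * x i := rfl
        rw [this]; ring
      rw [harg, Circle.smul_def, Real.fourierChar_apply, smul_eq_mul]
      push_cast
      ring
    rw [integral_congr_ae (Filter.Eventually.of_forall this)]
    have := hg_int.fourierInv_fourier_eq h𝓕g_int (hg_cont.continuousAt (x := z))
    rw [← this, Real.fourierInv_eq]
  have hscale : ∫ x, Fz ((2 * π) • x) = |((2 * π) ^ (Module.finrank ℝ E2))⁻¹| • ∫ x, Fz x :=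
    Measure.integral_comp_smul volume Fz (2 * π)
  rw [hinv, finrank_E2] at hscale
  have habs : |((2 * π : ℝ) ^ 2)⁻¹| = ((2 * π) ^ 2)⁻¹ := by
    rw [abs_of_pos]; positivity
  rw [habs] at hscale
  have hFzval : ∫ x, Fz x = (((2 * π : ℝ) ^ 2 : ℝ) : ℂ) * g z := by
    have h2 : ((2 * π : ℝ) ^ 2)⁻¹ • (∫ x, Fz x) = g z := hscale.symm
    have h3 := congrArg (fun w => (((2 * π : ℝ) ^ 2 : ℝ) : ℂ) * w) h2
    beta_reduce at h3
    rw [← h3, Complex.real_smul, ← mul_assoc, ← Complex.ofReal_mul]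
    rw [mul_inv_cancel₀ (by positivity : ((2 * π : ℝ) ^ 2 : ℝ) ≠ 0)]
    simp
  rw [hFzval]
  have hne : (((2 * π : ℝ) ^ 2 : ℝ) : ℂ) ≠ 0 := Complex.ofReal_ne_zero.2 (by positivity)
  have hπ0 : (π : ℂ) ≠ 0 := Complex.ofReal_ne_zero.2 Real.pi_ne_zero
  have hgz : g z = ((divPerpS S z : ℝ) : ℂ) := rfl
  rw [← hgz]
  field_simp
  ring_nf
  rw [Complex.I_sq]
  field_simp

end ElasticS2D

end
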